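/- If no input sequence of the interleaving algorithm is eventually periodic, then every term a_{i,j} of every input sequence appears in the output sequence; i.e., each input sequence can be reconstructed (in order) from the output. -/
import Mathlib


/-- the n-th triangular number -/
def tri (n : ℕ) : ℕ := n * (n + 1) / 2

/-- the diagonal index sequence `1, 2, 1, 2, 3, 1, 2, 3, 4, …` (for `k ≥ 1`):
`idx k = k − tri n + 1` for the unique `n` with `tri n ≤ k < tri (n+1)`. -/
def idx (k : ℕ) : ℕ := k - tri ((Nat.sqrt (8 * k + 1) - 1) / 2) + 1

/-- the minimal (finite) period of a list, if it has one -/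
def listPeriod? {X : Type*} [DecidableEq X] (L : List X) : Option ℕ :=
  (List.range L.length).find? fun k =>
    decide (0 < k) && (L.drop k == L.take (L.length - k))

/-- the block of length `n` following the cyclic repetition of the pattern `S`,
starting at phase `ph` -/
def patternBlock {X : Type*} (S : List X) (d : X) (ph n : ℕ) : List X :=
  (List.range n).map fun j => S.getD ((ph + j) % S.length) d

/-- the state of the sequence interleaving algorithm: `k` is the pointer into the
diagonal index sequence, `used i` is the number of terms already removed from input
sequence `i`, and `flag` is `some (S, ph)` when the Boolean flag `P` is true with
current finite-fundamental string `S` and phase `ph`, and `none` when `P` is false. -/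
structure IState (X : Type*) where
  k : ℕ
  used : ℕ → ℕ
  flag : Option (List X × ℕ)

/-- one stage of the sequence interleaving algorithm: from state `s`, form block `B_l`
by removing `2^l` terms from the beginning of the unused part of input sequence
`idx s.k`, then check/update the periodicity flag, incrementing `k` exactly when the
flag ends up false.  Returns the new state together with the block produced. -/
def step {X : Type*} [DecidableEq X] (a : ℕ → ℕ → X) (s : IState X) (l : ℕ) :
    IState X × List X :=
  let i := idx s.k
  let B := (List.range (2 ^ l)).map fun j => a i (s.used i + 1 + j)
  let used' := fun i' => if i' = i then s.used i + 2 ^ l else s.used i'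
  match s.flag with
  | none =>
    match listPeriod? B with
    | some p => (⟨s.k, used', some (B.take p, 2 ^ l % p)⟩, B)
    | none => (⟨s.k + 1, used', none⟩, B)
  | some (S, ph) =>
    if B = patternBlock S (a 1 1) ph (2 ^ l) then
      (⟨s.k, used', some (S, (ph + 2 ^ l) % S.length)⟩, B)
    else (⟨s.k + 1, used', none⟩, B)

/-- `run a l` is the state of the interleaving algorithm after producing blocks
`B_1, …, B_l`, starting from `k = 1`, nothing used, and flag `P = false`. -/
def run {X : Type*} [DecidableEq X] (a : ℕ → ℕ → X) : ℕ → IState X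
  | 0 => ⟨1, fun _ => 0, none⟩
  | n + 1 => (step a (run a n) (n + 1)).1

/-- `block a l` is the block `B_l` (of length `2^l`) produced by the algorithm. -/
def block {X : Type*} [DecidableEq X] (a : ℕ → ℕ → X) (l : ℕ) : List X :=
  (step a (run a (l - 1)) l).2

/-- the output sequence of the sequence interleaving algorithm (1-indexed): the
concatenation `B_1 + B_2 + ⋯`, so position `n` lies in block `l = log₂ (n+1)`,
which occupies positions `2^l − 1` through `2^(l+1) − 2`. -/
def output {X : Type*} [DecidableEq X] (a : ℕ → ℕ → X) (n : ℕ) : X :=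
  (block a (Nat.log2 (n + 1))).getD (n + 1 - 2 ^ Nat.log2 (n + 1)) (a 1 1)

/-- a sequence (with relevant indices `≥ 1`) is eventually periodic -/
def EvPeriodic {X : Type*} (b : ℕ → X) : Prop :=
  ∃ m, 1 ≤ m ∧ ∃ r, ∀ n > r, b (n + m) = b n


section Aux
variable {X : Type*} [DecidableEq X] (a : ℕ → ℕ → X)

lemma tri_succ (n : ℕ) : tri (n + 1) = tri n + (n + 1) := by
  have h2 : 2 ∣ n * (n + 1) := (Nat.even_mul_succ_self n).two_dvd
  unfold tri
  have : (n+1) * (n+2) = n * (n+1) + 2 * (n+1) := by ring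
  rw [this, Nat.add_mul_div_left _ _ (by norm_num)]

lemma sqrt_tri {n K : ℕ} (h1 : tri n ≤ K) (h2 : K < tri (n+1)) :
    (Nat.sqrt (8 * K + 1) - 1) / 2 = n := by
  have hd : 2 ∣ n * (n + 1) := (Nat.even_mul_succ_self n).two_dvd
  have hdm := Nat.div_mul_cancel hd
  have h8 : 8 * tri n = 4 * (n * (n+1)) := by unfold tri; omega
  have lb : (2*n+1)^2 ≤ 8 * K + 1 := by nlinarith [h8, h1]
  have ub : 8 * K + 1 < (2*n+3)^2 := by
    have := tri_succ n
    nlinarith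
  have l1 : 2*n+1 ≤ Nat.sqrt (8*K+1) := by rw [Nat.le_sqrt]; nlinarith
  have l2 : Nat.sqrt (8*K+1) < 2*n+3 := by rw [Nat.sqrt_lt]; nlinarith
  omega

lemma idx_tri {n i : ℕ} (h1 : 1 ≤ i) (h2 : i ≤ n + 1) : idx (tri n + (i - 1)) = i := by
  have hlt : tri n + (i-1) < tri (n+1) := by rw [tri_succ]; omega
  unfold idx
  rw [sqrt_tri (Nat.le_add_right _ _) hlt]
  omega

lemma idx_pos (k : ℕ) : 1 ≤ idx k := by unfold idx; omega

lemma listPeriod?_pos {L : List X} {p : ℕ} (h : listPeriod? L = some p) : 0 < p := by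
  have := List.find?_some h
  simp at this
  exact this.1

lemma step_snd (s : IState X) (l : ℕ) :
    (step a s l).2 = (List.range (2 ^ l)).map fun j => a (idx s.k) (s.used (idx s.k) + 1 + j) := by
  obtain ⟨k, u, f⟩ := s
  rcases f with _ | ⟨S, ph⟩ <;> simp only [step]
  · rcases hp : listPeriod? ((List.range (2 ^ l)).map fun j => a (idx k) (u (idx k) + 1 + j)) with _ | p <;> simp [hp]
  · split <;> simp

lemma step_used (s : IState X) (l : ℕ) (i' : ℕ) :
    (step a s l).1.used i' =
      if i' = idx s.k then s.used (idx s.k) + 2 ^ l else s.used i' := by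
  obtain ⟨k, u, f⟩ := s
  rcases f with _ | ⟨S, ph⟩ <;> simp only [step]
  · rcases hp : listPeriod? ((List.range (2 ^ l)).map fun j => a (idx k) (u (idx k) + 1 + j)) with _ | p <;> simp [hp]
  · split <;> simp

lemma step_k_cases (s : IState X) (l : ℕ) :
    (step a s l).1.k = s.k ∨ (step a s l).1.k = s.k + 1 := by
  obtain ⟨k, u, f⟩ := s
  rcases f with _ | ⟨S, ph⟩ <;> simp only [step]
  · rcases hp : listPeriod? ((List.range (2 ^ l)).map fun j => a (idx k) (u (idx k) + 1 + j)) with _ | p <;> simp [hp]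
  · split <;> simp

lemma step_k_eq_flag (s : IState X) (l : ℕ)
    (hinv : ∀ S ph, s.flag = some (S, ph) → S ≠ [])
    (hk : (step a s l).1.k = s.k) :
    ∃ S ph, (step a s l).1.flag = some (S, ph) ∧ S ≠ [] := by
  obtain ⟨k, u, f⟩ := s
  rcases f with _ | ⟨S, ph⟩ <;> simp only [step] at hk ⊢
  · rcases hp : listPeriod? ((List.range (2 ^ l)).map fun j => a (idx k) (u (idx k) + 1 + j)) with _ | p
    · rw [hp] at hk; simp at hk
    · refine ⟨_, _, rfl, ?_⟩
      have hppos := listPeriod?_pos hp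
      simp [List.take_eq_nil_iff]
      omega
  · split at hk
    · next heq =>
      rw [if_pos heq]
      exact ⟨S, _, rfl, hinv S ph rfl⟩
    · simp at hk

lemma step_flag_some (s : IState X) (l : ℕ) {S : List X} {ph : ℕ}
    (hf : s.flag = some (S, ph)) (hk : (step a s l).1.k = s.k) :
    (step a s l).2 = patternBlock S (a 1 1) ph (2 ^ l) ∧
      (step a s l).1.flag = some (S, (ph + 2 ^ l) % S.length) := by
  obtain ⟨k, u, f⟩ := s
  simp at hf
  subst hf
  simp only [step] at hk ⊢
  split at hk
  · next heq => rw [if_pos heq]; exact ⟨heq, rfl⟩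
  · simp at hk

lemma step_flag_ne_nil (s : IState X) (l : ℕ)
    (hinv : ∀ S ph, s.flag = some (S, ph) → S ≠ []) :
    ∀ S ph, (step a s l).1.flag = some (S, ph) → S ≠ [] := by
  obtain ⟨k, u, f⟩ := s
  rcases f with _ | ⟨S0, ph0⟩ <;> simp only [step] <;> intro S ph hS
  · rcases hp : listPeriod? ((List.range (2 ^ l)).map fun j => a (idx k) (u (idx k) + 1 + j)) with _ | p
    · rw [hp] at hS; simp at hS
    · rw [hp] at hS
      simp at hS
      have hppos := listPeriod?_pos hp
      rw [← hS.1]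
      simp [List.take_eq_nil_iff]
      omega
  · split at hS
    · simp at hS
      rw [← hS.1]
      exact hinv S0 ph0 rfl
    · simp at hS

/-! ### run-level lemmas -/

lemma run_succ (l : ℕ) : run a (l + 1) = (step a (run a l) (l + 1)).1 := rfl

lemma run_flag_inv (l : ℕ) :
    ∀ S ph, (run a l).flag = some (S, ph) → S ≠ [] := by
  induction l with
  | zero => intro S ph hS; simp [run] at hS
  | succ n IH => exact step_flag_ne_nil a (run a n) (n + 1) IH

lemma run_used_succ (l i' : ℕ) :
    (run a (l+1)).used i' =
      if i' = idx (run a l).k then (run a l).used i' + 2 ^ (l+1)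
      else (run a l).used i' := by
  rw [run_succ, step_used]
  split <;> simp_all

lemma run_used_mono (i' : ℕ) : Monotone fun l => (run a l).used i' := by
  apply monotone_nat_of_le_succ
  intro l
  have h2 : 1 ≤ 2 ^ (l+1) := Nat.one_le_two_pow
  simp only [run_used_succ]
  split <;> omega

lemma run_k_zero : (run a 0).k = 1 := rfl

lemma run_k_succ (l : ℕ) :
    (run a (l+1)).k = (run a l).k ∨ (run a (l+1)).k = (run a l).k + 1 := by
  rw [run_succ]; exact step_k_cases a (run a l) (l+1)

lemma run_k_mono : Monotone fun l => (run a l).k := by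
  apply monotone_nat_of_le_succ
  intro l
  rcases run_k_succ a l with h | h <;> omega

lemma block_succ (l : ℕ) : block a (l + 1) = (step a (run a l) (l + 1)).2 := by
  unfold block
  norm_num

lemma block_succ_eq (l : ℕ) :
    block a (l+1) = (List.range (2^(l+1))).map
      fun j => a (idx (run a l).k) ((run a l).used (idx (run a l).k) + 1 + j) := by
  rw [block_succ, step_snd]

lemma output_block {l j : ℕ} (hj : j < 2 ^ l) :
    output a (2 ^ l - 1 + j) = (block a l).getD j (a 1 1) := by
  have hpow : 1 ≤ 2 ^ l := Nat.one_le_two_pow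
  have h1 : 2 ^ l - 1 + j + 1 = 2 ^ l + j := by omega
  unfold output
  rw [h1]
  have hlog : Nat.log2 (2 ^ l + j) = l := by
    rw [Nat.log2_eq_log_two]
    apply Nat.log_eq_of_pow_le_of_lt_pow (Nat.le_add_right _ _)
    rw [pow_succ]
    omega
  rw [hlog]
  congr 1
  omega

end Aux


lemma k_not_eventually_const {X : Type*} [DecidableEq X] (a : ℕ → ℕ → X)
    (h : ∀ i, 1 ≤ i → ¬EvPeriodic (fun j => a i j)) (L : ℕ) :
    ∃ l, L ≤ l ∧ (run a (l+1)).k = (run a l).k + 1 := by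
  by_contra hc
  push_neg at hc
  have hkeq : ∀ l, L ≤ l → (run a (l+1)).k = (run a l).k := by
    intro l hl
    rcases run_k_succ a l with he | he
    · exact he
    · exact absurd he (hc l hl)
  have hkc : ∀ d, (run a (L+d)).k = (run a L).k := by
    intro d
    induction d with
    | zero => rfl
    | succ n IH => rw [← IH, show L + (n+1) = (L+n) + 1 from rfl, hkeq (L+n) (by omega)]
  set i := idx (run a L).k with hi_def
  have hi : 1 ≤ i := idx_pos _
  have hidx : ∀ l, L ≤ l → idx (run a l).k = i := by
    intro l hl
    obtain ⟨d, rfl⟩ := Nat.exists_eq_add_of_le hl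
    rw [hkc d]
  have hused : ∀ l, L ≤ l → (run a (l+1)).used i = (run a l).used i + 2^(l+1) := by
    intro l hl
    rw [run_used_succ, if_pos (hidx l hl).symm]
  have hgrow : ∀ d, (run a (L+1)).used i + d ≤ (run a (L+1+d)).used i := by
    intro d
    induction d with
    | zero => simp
    | succ n IH =>
      have h1 := hused (L+1+n) (by omega)
      have h2 : 1 ≤ 2^(L+1+n+1) := Nat.one_le_two_pow
      have h3 : L+1+(n+1) = (L+1+n)+1 := by omega
      rw [h3, h1]
      omega
  have hkL : (step a (run a L) (L+1)).1.k = (run a L).k := hkeq L le_rfl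
  obtain ⟨S, ph1, hflag1, hS⟩ := step_k_eq_flag a (run a L) (L+1) (run_flag_inv a L) hkL
  have hflag1' : (run a (L+1)).flag = some (S, ph1) := hflag1
  have hm : 1 ≤ S.length := List.length_pos_iff.mpr hS
  have chain : ∀ n l, L+1 ≤ l → ∀ ph, (run a l).flag = some (S, ph) →
      ∀ t, t < (run a (l+n)).used i - (run a l).used i →
        a i ((run a l).used i + 1 + t) = S.getD ((ph + t) % S.length) (a 1 1) := by
    intro n
    induction n with
    | zero => intro l hl ph hf t ht; simp at ht
    | succ n IH =>
      intro l hl ph hf t ht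
      have hkl : (step a (run a l) (l+1)).1.k = (run a l).k := hkeq l (by omega)
      obtain ⟨hblock, hflag'⟩ := step_flag_some a (run a l) (l+1) hf hkl
      have hsnd := step_snd a (run a l) (l+1)
      rw [hsnd] at hblock
      unfold patternBlock at hblock
      rw [List.map_eq_map_iff] at hblock
      have hentry : ∀ j, j < 2^(l+1) →
          a (idx (run a l).k) ((run a l).used (idx (run a l).k) + 1 + j)
            = S.getD ((ph + j) % S.length) (a 1 1) := by
        intro j hj
        exact hblock j (List.mem_range.mpr hj)
      rw [hidx l (by omega)] at hentry
      have husedl := hused l (by omega)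
      by_cases hlt : t < 2^(l+1)
      · exact hentry t hlt
      · have hf' : (run a (l+1)).flag = some (S, (ph + 2^(l+1)) % S.length) := hflag'
        have ht' : t - 2^(l+1) < (run a (l+1+n)).used i - (run a (l+1)).used i := by
          have h3 : l + (n+1) = (l+1) + n := by omega
          rw [h3] at ht
          omega
        have hrec := IH (l+1) (by omega) _ hf' (t - 2^(l+1)) ht'
        have harg : (run a (l+1)).used i + 1 + (t - 2^(l+1)) = (run a l).used i + 1 + t := by
          rw [husedl]; omega
        rw [harg] at hrec
        rw [hrec]
        congr 1
        rw [Nat.mod_add_mod]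
        congr 1
        omega
  have hval : ∀ n, (run a (L+1)).used i < n →
      a i n = S.getD ((ph1 + (n - (run a (L+1)).used i - 1)) % S.length) (a 1 1) := by
    intro n hn
    set r := (run a (L+1)).used i with hr
    set t := n - r - 1 with htdef
    have hht : t < (run a (L+1+(t+1))).used i - r := by
      have := hgrow (t+1)
      omega
    have := chain (t+1) (L+1) le_rfl ph1 hflag1' t (by rw [show L+1+(t+1) = (L+1)+(t+1) from rfl]; exact hht)
    rw [show r + 1 + t = n by omega] at this
    exact this
  apply h i hi
  refine ⟨S.length, hm, (run a (L+1)).used i, fun n hn => ?_⟩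
  have h1 := hval n hn
  have h2 := hval (n + S.length) (by omega)
  simp only [h1, h2]
  congr 1
  rw [show ph1 + (n + S.length - (run a (L+1)).used i - 1)
      = ph1 + (n - (run a (L+1)).used i - 1) + S.length by omega, Nat.add_mod_right]


lemma tri_ge (n : ℕ) : n ≤ tri n := by
  unfold tri
  have h1 : 2 * n ≤ n * (n+1) := by
    cases n with
    | zero => simp
    | succ m => nlinarith
  omega

lemma k_unbounded {X : Type*} [DecidableEq X] (a : ℕ → ℕ → X)
    (h : ∀ i, 1 ≤ i → ¬EvPeriodic (fun j => a i j)) (C : ℕ) :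
    ∃ l, C ≤ (run a l).k := by
  induction C with
  | zero => exact ⟨0, by omega⟩
  | succ n IH =>
    obtain ⟨l, hl⟩ := IH
    obtain ⟨l', hl', hstep⟩ := k_not_eventually_const a h l
    refine ⟨l'+1, ?_⟩
    have := run_k_mono a hl'
    simp only at this
    omega

lemma k_hits {X : Type*} [DecidableEq X] (a : ℕ → ℕ → X)
    (h : ∀ i, 1 ≤ i → ¬EvPeriodic (fun j => a i j)) (K : ℕ) (hK : 1 ≤ K) :
    ∃ l, (run a l).k = K := by
  obtain ⟨l0, hl0⟩ := k_unbounded a h (K+1)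
  have main : ∀ n, K + 1 ≤ (run a n).k → ∃ l, (run a l).k = K := by
    intro n
    induction n with
    | zero =>
      intro h0
      rw [run_k_zero] at h0
      exact absurd h0 (by omega)
    | succ n IH =>
      intro hn
      by_cases hc : K + 1 ≤ (run a n).k
      · exact IH hc
      · rcases run_k_succ a n with he | he
        · exact absurd (he ▸ hn) hc
        · exact ⟨n, by omega⟩
  exact main l0 hl0

lemma k_ge_one {X : Type*} [DecidableEq X] (a : ℕ → ℕ → X) (l : ℕ) :
    1 ≤ (run a l).k := by
  have := run_k_mono a (Nat.zero_le l)
  simp only [run_k_zero] at this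
  exact this

lemma used_unbounded {X : Type*} [DecidableEq X] (a : ℕ → ℕ → X)
    (h : ∀ i, 1 ≤ i → ¬EvPeriodic (fun j => a i j)) (i : ℕ) (hi : 1 ≤ i) (C : ℕ) :
    ∃ l, C ≤ (run a l).used i := by
  induction C with
  | zero => exact ⟨0, by omega⟩
  | succ C IH =>
    obtain ⟨l, hl⟩ := IH
    set n := (run a l).k + i with hn
    set K := tri n + (i - 1) with hKdef
    have htri := tri_ge n
    have hidxK : idx K = i := idx_tri hi (by omega)
    have hKgt : (run a l).k < K := by omega
    obtain ⟨l', hl'⟩ := k_hits a h K (by omega)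
    have hll' : l ≤ l' := by
      by_contra hc
      have := run_k_mono a (show l' ≤ l by omega)
      simp only at this
      omega
    have hidx' : idx (run a l').k = i := by rw [hl', hidxK]
    have hU : (run a (l'+1)).used i = (run a l').used i + 2^(l'+1) := by
      rw [run_used_succ, if_pos hidx'.symm]
    have hmono := run_used_mono a i hll'
    simp only at hmono
    have h2 : 1 ≤ 2^(l'+1) := Nat.one_le_two_pow
    exact ⟨l'+1, by omega⟩

/-- If no input sequence of the interleaving algorithm is eventually
periodic, then every term of every input sequence appears, in order, in the output
sequence; i.e. each input sequence can be reconstructed from the output. -/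
theorem stmt16 {X : Type*} [DecidableEq X] (a : ℕ → ℕ → X)
    (h : ∀ i, 1 ≤ i → ¬EvPeriodic (fun j => a i j)) :
    ∀ i, 1 ≤ i → ∃ φ : ℕ → ℕ, StrictMono φ ∧ ∀ j, 1 ≤ j → output a (φ j) = a i j := by
  intro i hi
  have hub : ∀ j : ℕ, ∃ l, j ≤ (run a l).used i := fun j => used_unbounded a h i hi j
  set L : ℕ → ℕ := fun j => Nat.find (hub j) with hL
  have hLspec : ∀ j, j ≤ (run a (L j)).used i := fun j => Nat.find_spec (hub j)
  have hLmin : ∀ j l, l < L j → (run a l).used i < j := by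
    intro j l hl
    have := Nat.find_min (hub j) hl
    omega
  have hused0 : (run a 0).used i = 0 := rfl
  have hLpos : ∀ j, 1 ≤ j → 1 ≤ L j := by
    intro j hj
    by_contra hc
    have := hLspec j
    have h0 : L j = 0 := by omega
    rw [h0, hused0] at this
    omega
  have hLmono : ∀ j j', j ≤ j' → L j ≤ L j' := by
    intro j j' hjj
    exact Nat.find_mono fun n hn => le_trans hjj hn
  set φ : ℕ → ℕ := fun j => 2 ^ (L j) - 1 + (j - (run a (L j - 1)).used i - 1) with hφ
  have key : ∀ j, 1 ≤ j →
      (run a (L j - 1)).used i < j ∧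
      (run a (L j)).used i = (run a (L j - 1)).used i + 2 ^ (L j) ∧
      output a (φ j) = a i j := by
    intro j hj
    obtain ⟨l, hl⟩ : ∃ l, L j = l + 1 := ⟨L j - 1, by have := hLpos j hj; omega⟩
    have h1 : (run a l).used i < j := hLmin j l (by omega)
    have h2 : j ≤ (run a (l+1)).used i := by have := hLspec j; rwa [hl] at this
    have hchanged : idx (run a l).k = i := by
      by_contra hne
      rw [run_used_succ, if_neg (fun hh => hne hh.symm)] at h2
      omega
    have hU : (run a (l+1)).used i = (run a l).used i + 2^(l+1) := by
      rw [run_used_succ, if_pos hchanged.symm]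
    have hl1 : L j - 1 = l := by omega
    refine ⟨by rw [hl1]; exact h1, by simp only [hl, Nat.add_sub_cancel]; exact hU, ?_⟩
    have hjj : j - (run a l).used i - 1 < 2^(l+1) := by rw [hU] at h2; omega
    have hout := output_block a (l := l+1) (j := j - (run a l).used i - 1) hjj
    simp only [hφ, hl, Nat.add_sub_cancel]
    rw [hout, block_succ_eq, hchanged]
    rw [List.getD_eq_getElem _ _ (by simpa using hjj)]
    simp only [List.getElem_map, List.getElem_range]
    congr 1
    omega
  refine ⟨φ, ?_, fun j hj => (key j hj).2.2⟩
  apply strictMono_nat_of_lt_succ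
  intro j
  rcases Nat.eq_zero_or_pos j with rfl | hj
  · have hL0 : L 0 = 0 := by
      rw [hL]
      simp [Nat.find_eq_zero]
    have hL1 : 1 ≤ L 1 := hLpos 1 le_rfl
    have h2 : 1 ≤ 2 ^ (L 1) - 1 := by
      have : 2 ≤ 2 ^ (L 1) := by
        calc 2 = 2^1 := rfl
        _ ≤ 2 ^ (L 1) := Nat.pow_le_pow_right (by norm_num) hL1
      omega
    obtain ⟨hu1, _, _⟩ := key 1 le_rfl
    have hu1' : (run a (L 1 - 1)).used i = 0 := by omega
    simp only [hφ, hL0, pow_zero, hu1']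
    simp only [Nat.zero_add]
    omega
  · obtain ⟨hu, hU, _⟩ := key j hj
    obtain ⟨hu', hU', _⟩ := key (j+1) (by omega)
    have hLm : L j ≤ L (j+1) := hLmono j (j+1) (by omega)
    rcases eq_or_lt_of_le hLm with heq | hlt
    · simp only [hφ, ← heq]
      omega
    · have hjle : j ≤ (run a (L j)).used i := hLspec j
      have hb1 : j - (run a (L j - 1)).used i - 1 ≤ 2 ^ (L j) - 1 := by omega
      have hpow : 2 ^ (L j) + 2 ^ (L j) ≤ 2 ^ (L (j+1)) := by
        calc 2 ^ (L j) + 2 ^ (L j) = 2 ^ (L j + 1) := by ring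
        _ ≤ 2 ^ (L (j+1)) := Nat.pow_le_pow_right (by norm_num) hlt
      have hp1 : 1 ≤ 2 ^ (L j) := Nat.one_le_two_pow
      simp only [hφ]
      omega
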